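/- arXiv:nlin/0612022 — 2 statements merged into one kernel-verified Lean document; each statement's English description precedes it below -/
import Mathlib

section
/- For every integer N ≥ 1, every C^∞ function h on an open set Ω ⊆ ℝ^N, and every triple of indices i, j, k ∈ ℕ, the sums defining the Nijenhuis tensor N^i_{jk} and the Haantjes tensor H^i_{jk} of the Kupershmidt–Manin chain associated with h contain only finitely many nonzero summands: there is an integer M (depending only on N, i, j, k) such that every summand in which a summation index exceeds M vanishes identically. Consequently N^i_{jk} and H^i_{jk} are well-defined functions of only finitely many of the moments A^0, A^1, A^2, …. -/
open scoped BigOperators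

/-- Partial derivative of a functional of the moments `A = (A^0, A^1, …)`
with respect to the moment `A^s`. -/
noncomputable def pd (s : ℕ) (F : (ℕ → ℝ) → ℝ) : (ℕ → ℝ) → ℝ :=
  fun A => deriv (fun t => F (Function.update A s t)) (A s)

/-- Extension of a function of the first `N` moments to a functional of all moments. -/
noncomputable def momExt (N : ℕ) (h : (Fin N → ℝ) → ℝ) : (ℕ → ℝ) → ℝ :=
  fun A => h (fun i => A (i : ℕ))

/-- The matrix `V^n_j` of the Kupershmidt–Manin hydrodynamic chain associated with a
Hamiltonian density `h(A^0,…,A^{N−1})`: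
`V^n_j = Σ_{m=0}^{N−1} (m+n) A^{m+n−1} h_{mj} + Σ_{m=0}^{N−1} m h_m δ_{j,m+n−1}`,
where the first sum is absent for `j ≥ N` and terms with factor `m+n = 0` vanish. -/
noncomputable def KMV (N : ℕ) (h : (Fin N → ℝ) → ℝ) (n j : ℕ) (A : ℕ → ℝ) : ℝ :=
  (if j < N then
    ∑ m ∈ Finset.range N,
      (if m + n = 0 then (0 : ℝ) else ((m + n : ℕ) : ℝ) * A (m + n - 1)) *
        pd m (pd j (momExt N h)) A
   else 0)
  + ∑ m ∈ Finset.range N,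
      (if m + n = j + 1 then (m : ℝ) * pd m (momExt N h) A else 0)

/-- The `s`-summand of the Nijenhuis tensor
`N^i_{jk} = Σ_s (V^s_j ∂V^i_k/∂A^s − V^s_k ∂V^i_j/∂A^s) − Σ_s V^i_s (∂V^s_k/∂A^j − ∂V^s_j/∂A^k)`. -/
noncomputable def nijSummand (N : ℕ) (h : (Fin N → ℝ) → ℝ) (i j k s : ℕ) (A : ℕ → ℝ) : ℝ :=
  KMV N h s j A * pd s (KMV N h i k) A - KMV N h s k A * pd s (KMV N h i j) A
    - KMV N h i s A * (pd j (KMV N h s k) A - pd k (KMV N h s j) A)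

/-- The Nijenhuis tensor of the Kupershmidt–Manin chain. -/
noncomputable def KMNij (N : ℕ) (h : (Fin N → ℝ) → ℝ) (i j k : ℕ) (A : ℕ → ℝ) : ℝ :=
  ∑' s : ℕ, nijSummand N h i j k s A

/-- The `(α,β)`-summand of the Haantjes tensor
`H^i_{jk} = Σ_{α,β} (N^i_{αβ} V^α_j V^β_k − N^α_{jβ} V^i_α V^β_k − N^α_{βk} V^i_α V^β_j
+ N^α_{jk} V^i_β V^β_α)`. -/
noncomputable def haanSummand (N : ℕ) (h : (Fin N → ℝ) → ℝ) (i j k a b : ℕ) (A : ℕ → ℝ) : ℝ :=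
  KMNij N h i a b A * KMV N h a j A * KMV N h b k A
    - KMNij N h a j b A * KMV N h i a A * KMV N h b k A
    - KMNij N h a b k A * KMV N h i a A * KMV N h b j A
    + KMNij N h a j k A * KMV N h i b A * KMV N h b a A

/-- The Haantjes tensor of the Kupershmidt–Manin chain. -/
noncomputable def KMHaan (N : ℕ) (h : (Fin N → ℝ) → ℝ) (i j k : ℕ) (A : ℕ → ℝ) : ℝ :=
  ∑' a : ℕ, ∑' b : ℕ, haanSummand N h i j k a b A

/-- A functional of the moments depends only on the moments `A^n`, `n < M`. -/
def Loc (M : ℕ) (F : (ℕ → ℝ) → ℝ) : Prop :=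
  ∀ A B : ℕ → ℝ, (∀ n, n < M → A n = B n) → F A = F B

lemma loc_mono {M M' : ℕ} {F : (ℕ → ℝ) → ℝ} (hF : Loc M F) (hM : M ≤ M') : Loc M' F :=
  fun A B hAB => hF A B fun n hn => hAB n (hn.trans_le hM)

lemma pd_congr_zero {F : (ℕ → ℝ) → ℝ} (hF : ∀ A, F A = 0) (s : ℕ) (A : ℕ → ℝ) :
    pd s F A = 0 := by
  unfold pd
  have : (fun t => F (Function.update A s t)) = fun _ => (0 : ℝ) := funext fun t => hF _
  rw [this, deriv_const]

lemma loc_pd {M : ℕ} {F : (ℕ → ℝ) → ℝ} (hF : Loc M F) (s : ℕ) : Loc M (pd s F) := by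
  intro A B hAB
  unfold pd
  by_cases hs : s < M
  · have h1 : (fun t => F (Function.update A s t)) = fun t => F (Function.update B s t) := by
      funext t
      refine hF _ _ fun n hn => ?_
      rcases eq_or_ne n s with rfl | hne
      · simp
      · rw [Function.update_of_ne hne, Function.update_of_ne hne]
        exact hAB n hn
    rw [h1, hAB s hs]
  · have h1 : (fun t => F (Function.update A s t)) = fun _ => F A := funext fun t =>
      hF _ _ fun n hn => Function.update_of_ne (by omega) _ _
    have h2 : (fun t => F (Function.update B s t)) = fun _ => F B := funext fun t =>
      hF _ _ fun n hn => Function.update_of_ne (by omega) _ _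
    rw [h1, h2, deriv_const, deriv_const]

lemma loc_pd_eq_zero {M : ℕ} {F : (ℕ → ℝ) → ℝ} (hF : Loc M F) {s : ℕ} (hs : M ≤ s)
    (A : ℕ → ℝ) : pd s F A = 0 := by
  unfold pd
  have h1 : (fun t => F (Function.update A s t)) = fun _ => F A := funext fun t =>
    hF _ _ fun n hn => Function.update_of_ne (by omega) _ _
  rw [h1, deriv_const]

lemma loc_momExt (N : ℕ) (h : (Fin N → ℝ) → ℝ) : Loc N (momExt N h) := by
  intro A B hAB
  unfold momExt
  congr 1
  funext i
  exact hAB i i.isLt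

lemma loc_KMV (N : ℕ) (h : (Fin N → ℝ) → ℝ) (n j : ℕ) : Loc (N + n) (KMV N h n j) := by
  intro A B hAB
  unfold KMV
  have hd2 : ∀ m l : ℕ, pd m (pd l (momExt N h)) A = pd m (pd l (momExt N h)) B :=
    fun m l => loc_mono (loc_pd (loc_pd (loc_momExt N h) l) m) (Nat.le_add_right N n) A B hAB
  have hd1 : ∀ m : ℕ, pd m (momExt N h) A = pd m (momExt N h) B :=
    fun m => loc_mono (loc_pd (loc_momExt N h) m) (Nat.le_add_right N n) A B hAB
  congr 1
  · by_cases hj : j < N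
    · rw [if_pos hj, if_pos hj]
      refine Finset.sum_congr rfl fun m hm => ?_
      have hm' := Finset.mem_range.mp hm
      rw [hd2 m j]
      congr 1
      by_cases h0 : m + n = 0
      · rw [if_pos h0, if_pos h0]
      · rw [if_neg h0, if_neg h0, hAB (m + n - 1) (by omega)]
    · rw [if_neg hj, if_neg hj]
  · refine Finset.sum_congr rfl fun m _ => ?_
    by_cases hmn : m + n = j + 1
    · rw [if_pos hmn, if_pos hmn, hd1 m]
    · rw [if_neg hmn, if_neg hmn]

lemma KMV_zero (N : ℕ) (h : (Fin N → ℝ) → ℝ) (n j : ℕ) (hj : N + n ≤ j) (A : ℕ → ℝ) :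
    KMV N h n j A = 0 := by
  unfold KMV
  rw [if_neg (by omega : ¬ j < N), zero_add]
  refine Finset.sum_eq_zero fun m hm => ?_
  have hm' := Finset.mem_range.mp hm
  exact if_neg (by omega)

lemma nijSummand_zero (N : ℕ) (h : (Fin N → ℝ) → ℝ) (x y z s : ℕ)
    (H : N + x ≤ s ∨ 2 * N + x ≤ y ∨ 2 * N + x ≤ z) (A : ℕ → ℝ) :
    nijSummand N h x y z s A = 0 := by
  by_cases hs : N + x ≤ s
  · unfold nijSummand
    rw [loc_pd_eq_zero (loc_KMV N h x z) hs, loc_pd_eq_zero (loc_KMV N h x y) hs,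
      KMV_zero N h x s hs]
    ring
  · rcases H with H | H | H
    · omega
    · unfold nijSummand
      rw [KMV_zero N h s y (by omega),
        pd_congr_zero (fun C => KMV_zero N h x y (by omega) C) s,
        loc_pd_eq_zero (loc_KMV N h s z) (show N + s ≤ y by omega),
        pd_congr_zero (fun C => KMV_zero N h s y (by omega) C) z]
      ring
    · unfold nijSummand
      rw [KMV_zero N h s z (by omega),
        pd_congr_zero (fun C => KMV_zero N h x z (by omega) C) s,
        pd_congr_zero (fun C => KMV_zero N h s z (by omega) C) y,
        loc_pd_eq_zero (loc_KMV N h s y) (show N + s ≤ z by omega)]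
      ring

lemma KMNij_zero (N : ℕ) (h : (Fin N → ℝ) → ℝ) (x y z : ℕ)
    (H : 2 * N + x ≤ y ∨ 2 * N + x ≤ z) (A : ℕ → ℝ) : KMNij N h x y z A = 0 := by
  unfold KMNij
  have hz : ∀ s : ℕ, nijSummand N h x y z s A = 0 :=
    fun s => nijSummand_zero N h x y z s (Or.inr H) A
  simp only [hz, tsum_zero]

lemma loc_nijSummand (N : ℕ) (h : (Fin N → ℝ) → ℝ) (x y z s : ℕ) :
    Loc (N + x + s) (nijSummand N h x y z s) := by
  intro A B hAB
  unfold nijSummand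
  rw [loc_mono (loc_KMV N h s y) (by omega) A B hAB,
    loc_mono (loc_pd (loc_KMV N h x z) s) (by omega) A B hAB,
    loc_mono (loc_KMV N h s z) (by omega) A B hAB,
    loc_mono (loc_pd (loc_KMV N h x y) s) (by omega) A B hAB,
    loc_mono (loc_KMV N h x s) (by omega) A B hAB,
    loc_mono (loc_pd (loc_KMV N h s z) y) (by omega) A B hAB,
    loc_mono (loc_pd (loc_KMV N h s y) z) (by omega) A B hAB]

lemma loc_KMNij (N : ℕ) (h : (Fin N → ℝ) → ℝ) (x y z : ℕ) :
    Loc (2 * N + 2 * x) (KMNij N h x y z) := by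
  intro A B hAB
  unfold KMNij
  refine tsum_congr fun s => ?_
  by_cases hs : N + x ≤ s
  · rw [nijSummand_zero N h x y z s (Or.inl hs) A, nijSummand_zero N h x y z s (Or.inl hs) B]
  · exact loc_mono (loc_nijSummand N h x y z s) (by omega) A B hAB

lemma haanSummand_zero (N : ℕ) (h : (Fin N → ℝ) → ℝ) (i j k a b : ℕ)
    (H : 4 * N + i ≤ a ∨ 4 * N + i ≤ b) (A : ℕ → ℝ) : haanSummand N h i j k a b A = 0 := by
  unfold haanSummand
  rcases H with H | H
  · rw [KMNij_zero N h i a b (Or.inl (by omega)) A, KMV_zero N h i a (by omega) A]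
    by_cases hb : N + i ≤ b
    · rw [KMV_zero N h i b hb A]; ring
    · rw [KMV_zero N h b a (by omega) A]; ring
  · rw [KMNij_zero N h i a b (Or.inr (by omega)) A, KMV_zero N h i b (by omega) A]
    by_cases ha : N + i ≤ a
    · rw [KMV_zero N h i a ha A]; ring
    · rw [KMNij_zero N h a j b (Or.inr (by omega)) A,
        KMNij_zero N h a b k (Or.inl (by omega)) A]
      ring

lemma loc_haanSummand (N : ℕ) (h : (Fin N → ℝ) → ℝ) (i j k a b : ℕ) :
    Loc (2 * N + 2 * i + 2 * a + 2 * b + 1) (haanSummand N h i j k a b) := by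
  intro A B hAB
  unfold haanSummand
  rw [loc_mono (loc_KMNij N h i a b) (by omega) A B hAB,
    loc_mono (loc_KMV N h a j) (by omega) A B hAB,
    loc_mono (loc_KMV N h b k) (by omega) A B hAB,
    loc_mono (loc_KMNij N h a j b) (by omega) A B hAB,
    loc_mono (loc_KMV N h i a) (by omega) A B hAB,
    loc_mono (loc_KMNij N h a b k) (by omega) A B hAB,
    loc_mono (loc_KMV N h b j) (by omega) A B hAB,
    loc_mono (loc_KMNij N h a j k) (by omega) A B hAB,
    loc_mono (loc_KMV N h i b) (by omega) A B hAB,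
    loc_mono (loc_KMV N h b a) (by omega) A B hAB]

/-- For every `N ≥ 1`, every `C^∞` function `h` on an open set `Ω ⊆ ℝ^N`,
and all indices `i, j, k`, the sums defining the Nijenhuis and Haantjes tensors of the
Kupershmidt–Manin chain contain only finitely many nonzero summands: there is `M`
(depending only on `N, i, j, k`) such that every summand in which a summation index exceeds
`M` vanishes identically.  Consequently `N^i_{jk}` and `H^i_{jk}` are well-defined functions
of only finitely many of the moments. -/
theorem nij_haan_finitely_many_summands (N : ℕ) (hN : 1 ≤ N) (i j k : ℕ) :
    ∃ M : ℕ,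
      ∀ (Ω : Set (Fin N → ℝ)), IsOpen Ω →
      ∀ h : (Fin N → ℝ) → ℝ, ContDiffOn ℝ (⊤ : ℕ∞) h Ω →
        (∀ s : ℕ, M < s → ∀ A : ℕ → ℝ, nijSummand N h i j k s A = 0) ∧
        (∀ a b : ℕ, M < a ∨ M < b → ∀ A : ℕ → ℝ, haanSummand N h i j k a b A = 0) ∧
        (∀ A B : ℕ → ℝ, (∀ n : ℕ, n ≤ M → A n = B n) →
          KMNij N h i j k A = KMNij N h i j k B ∧
          KMHaan N h i j k A = KMHaan N h i j k B) := by
  refine ⟨20 * N + 8 * i + j + k + 10, ?_⟩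
  intro Ω hΩ h hsm
  refine ⟨?_, ?_, ?_⟩
  · intro s hs A
    exact nijSummand_zero N h i j k s (Or.inl (by omega)) A
  · intro a b hab A
    exact haanSummand_zero N h i j k a b (by omega) A
  · intro A B hAB
    constructor
    · exact loc_KMNij N h i j k A B fun n hn => hAB n (by omega)
    · unfold KMHaan
      refine tsum_congr fun a => tsum_congr fun b => ?_
      by_cases hab : 4 * N + i ≤ a ∨ 4 * N + i ≤ b
      · rw [haanSummand_zero N h i j k a b hab A, haanSummand_zero N h i j k a b hab B]
      · push_neg at hab
        exact loc_haanSummand N h i j k a b A B fun n hn => hAB n (by omega)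
end

section
/- Let N ≥ 3 and let h be any C^∞ function on an open set Ω ⊆ ℝ^N. Then for every i ∈ ℕ and all indices j, k ∈ ℕ with j > 3N−5 and k > 3N−5, the Haantjes tensor component H^i_{jk} of the Kupershmidt–Manin chain associated with h vanishes identically, i.e., H^i_{jk}(A) = 0 for all moment values A with (A^0,…,A^{N−1}) ∈ Ω. -/
open scoped BigOperators

lemma momExt_update_ge (N : ℕ) (h : (Fin N → ℝ) → ℝ) (A : ℕ → ℝ) (s : ℕ)
    (hs : N ≤ s) (t : ℝ) : momExt N h (Function.update A s t) = momExt N h A := by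
  unfold momExt
  congr 1
  funext i
  exact Function.update_of_ne (Nat.ne_of_lt (lt_of_lt_of_le i.isLt hs)) t A

lemma pd_momExt_update (N : ℕ) (h : (Fin N → ℝ) → ℝ) (A : ℕ → ℝ) (m s : ℕ)
    (hm : m < N) (hs : N ≤ s) (t : ℝ) :
    pd m (momExt N h) (Function.update A s t) = pd m (momExt N h) A := by
  unfold pd
  rw [Function.update_of_ne (show m ≠ s by omega)]
  congr 1
  funext u
  unfold momExt
  congr 1
  funext i
  rcases eq_or_ne (i : ℕ) m with hi | hi
  · rw [hi, Function.update_self, Function.update_self]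
  · rw [Function.update_of_ne hi, Function.update_of_ne hi,
      Function.update_of_ne (Nat.ne_of_lt (lt_of_lt_of_le i.isLt hs))]

lemma KMV_update_ge (N : ℕ) (h : (Fin N → ℝ) → ℝ) (A : ℕ → ℝ) (n k s : ℕ)
    (hk : N ≤ k) (hs : N ≤ s) (t : ℝ) :
    KMV N h n k (Function.update A s t) = KMV N h n k A := by
  unfold KMV
  rw [if_neg (by omega), if_neg (by omega)]
  congr 1
  apply Finset.sum_congr rfl
  intro m hm
  by_cases hc : m + n = k + 1
  · rw [if_pos hc, if_pos hc,
      pd_momExt_update N h A m s (Finset.mem_range.mp hm) hs t]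
  · rw [if_neg hc, if_neg hc]

lemma pd_KMV_ge (N : ℕ) (h : (Fin N → ℝ) → ℝ) (A : ℕ → ℝ) (n k s : ℕ)
    (hk : N ≤ k) (hs : N ≤ s) : pd s (KMV N h n k) A = 0 := by
  unfold pd
  have : (fun t => KMV N h n k (Function.update A s t)) = fun _ => KMV N h n k A :=
    funext fun t => KMV_update_ge N h A n k s hk hs t
  rw [this, deriv_const]

lemma KMV_eq_zero (N : ℕ) (h : (Fin N → ℝ) → ℝ) (A : ℕ → ℝ) (n k : ℕ)
    (hk : N ≤ k) (hnk : n + N ≤ k + 1) : KMV N h n k A = 0 := by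
  unfold KMV
  rw [if_neg (by omega), zero_add]
  apply Finset.sum_eq_zero
  intro m hm
  rw [if_neg (by have := Finset.mem_range.mp hm; omega)]

lemma KMNij_eq_zero (N : ℕ) (h : (Fin N → ℝ) → ℝ) (A : ℕ → ℝ) (i j k : ℕ)
    (hN : 3 ≤ N) (hj : 2 * N ≤ j + 2) (hk : 2 * N ≤ k + 2) :
    KMNij N h i j k A = 0 := by
  unfold KMNij
  have hz : ∀ s, nijSummand N h i j k s A = 0 := by
    intro s
    unfold nijSummand
    rw [pd_KMV_ge N h A s k j (by omega) (by omega),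
        pd_KMV_ge N h A s j k (by omega) (by omega)]
    by_cases hs : N ≤ s
    · rw [pd_KMV_ge N h A i k s (by omega) hs, pd_KMV_ge N h A i j s (by omega) hs]
      ring
    · rw [KMV_eq_zero N h A s j (by omega) (by omega),
          KMV_eq_zero N h A s k (by omega) (by omega)]
      ring
  simp only [hz]
  exact tsum_zero

lemma haanSummand_eq_zero (N : ℕ) (h : (Fin N → ℝ) → ℝ) (A : ℕ → ℝ)
    (i j k a b : ℕ) (hN : 3 ≤ N) (hj : 3 * N - 5 < j) (hk : 3 * N - 5 < k) :
    haanSummand N h i j k a b A = 0 := by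
  unfold haanSummand
  have T1 : KMNij N h i a b A * KMV N h a j A * KMV N h b k A = 0 := by
    by_cases ha : a + N ≤ j + 1
    · rw [KMV_eq_zero N h A a j (by omega) ha]; ring
    · by_cases hb : b + N ≤ k + 1
      · rw [KMV_eq_zero N h A b k (by omega) hb]; ring
      · rw [KMNij_eq_zero N h A i a b hN (by omega) (by omega)]; ring
  have T2 : KMNij N h a j b A * KMV N h i a A * KMV N h b k A = 0 := by
    by_cases hb : b + N ≤ k + 1
    · rw [KMV_eq_zero N h A b k (by omega) hb]; ring
    · rw [KMNij_eq_zero N h A a j b hN (by omega) (by omega)]; ring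
  have T3 : KMNij N h a b k A * KMV N h i a A * KMV N h b j A = 0 := by
    by_cases hb : b + N ≤ j + 1
    · rw [KMV_eq_zero N h A b j (by omega) hb]; ring
    · rw [KMNij_eq_zero N h A a b k hN (by omega) (by omega)]; ring
  have T4 : KMNij N h a j k A * KMV N h i b A * KMV N h b a A = 0 := by
    rw [KMNij_eq_zero N h A a j k hN (by omega) (by omega)]; ring
  rw [T1, T2, T3, T4]; ring

/-- For `N ≥ 3` and any `C^∞` Hamiltonian density `h` on an open
`Ω ⊆ ℝ^N`, the Haantjes tensor components `H^i_{jk}` of the associated Kupershmidt–Manin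
chain vanish identically whenever `j > 3N−5` and `k > 3N−5`. -/
theorem kmHaan_vanishes_for_large_lower_indices (N : ℕ) (hN : 3 ≤ N)
    (Ω : Set (Fin N → ℝ)) (hΩ : IsOpen Ω)
    (h : (Fin N → ℝ) → ℝ) (hh : ContDiffOn ℝ (⊤ : ℕ∞) h Ω)
    (i j k : ℕ) (hj : 3 * N - 5 < j) (hk : 3 * N - 5 < k) :
    ∀ A : ℕ → ℝ, (fun m : Fin N => A (m : ℕ)) ∈ Ω → KMHaan N h i j k A = 0 := by
  intro A _
  unfold KMHaan
  have hz : ∀ a b, haanSummand N h i j k a b A = 0 := fun a b =>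
    haanSummand_eq_zero N h A i j k a b hN hj hk
  simp only [hz]
  simp only [tsum_zero]
end
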